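/- arXiv:1602.05117 — 3 statements merged into one kernel-verified Lean document; each statement's English description precedes it below -/
import Mathlib

section
/- Let a, b, c, d, α, β be positive real numbers such that a ≤ c, b ≤ d, βd ≤ αb, and such that ψ(a+bt) > 0 and ψ(c+dt) > 0 for all t ∈ [0,∞). Then for every t ∈ [0,1], [ψ(a)]^α/[ψ(c)]^β ≤ [ψ(a+bt)]^α/[ψ(c+dt)]^β ≤ [ψ(a+b)]^α/[ψ(c+d)]^β. -/
/-!
On `(0, ∞)` the digamma function is increasing (`log Γ` is convex) and concave: iterating
`ψ (x + 1) = ψ x + 1 / x` gives `ψ x = ψ (x + n) - ∑ k < n, 1 / (x + k)`, a convex sum subtracted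
from a shift of `ψ` whose oscillation on a bounded interval tends to `0` as `n → ∞`.
Hence `ψ' / ψ` decreases where `ψ > 0`, and as `a + b t ≤ c + d t` and `β d ≤ α b`,
`F t = α log ψ (a + b t) - β log ψ (c + d t)` has derivative
`α b (ψ' / ψ) (a + b t) - β d (ψ' / ψ) (c + d t) ≥ 0`. So `exp ∘ F` is increasing on `[0, ∞)`.
-/

noncomputable def psi (t : ℝ) : ℝ := deriv Real.Gamma t / Real.Gamma t

open Real Set Filter Topology

lemma analyticOnNhd_Gamma_Ioi : AnalyticOnNhd ℝ Gamma (Ioi 0) := by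
  have hC : AnalyticOnNhd ℂ Complex.Gamma {s : ℂ | 0 < s.re} := by
    refine DifferentiableOn.analyticOnNhd (fun s hs ↦ ?_)
      (isOpen_lt continuous_const Complex.continuous_re)
    refine (Complex.differentiableAt_Gamma s fun m hm ↦ ?_).differentiableWithinAt
    have : (0 : ℝ) ≤ m := m.cast_nonneg
    simp only [hm, mem_ofPred_eq, Complex.neg_re, Complex.natCast_re] at hs
    linarith
  intro x hx
  have hre : AnalyticAt ℝ (fun y : ℝ ↦ (Complex.Gamma y).re) x :=
    (Complex.reCLM.analyticAt _).comp
      ((hC x (by simpa using hx)).restrictScalars.comp (Complex.ofRealCLM.analyticAt x))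
  exact hre.congr (.of_forall fun y ↦ by simp [Complex.Gamma_ofReal])

lemma differentiableAt_psi {x : ℝ} (hx : 0 < x) : DifferentiableAt ℝ psi x :=
  ((analyticOnNhd_Gamma_Ioi.deriv_of_isOpen isOpen_Ioi x hx).div (analyticOnNhd_Gamma_Ioi x hx)
    (Gamma_pos_of_pos hx).ne').differentiableAt

lemma psi_add_one {x : ℝ} (hx : 0 < x) : psi (x + 1) = psi x + x⁻¹ := by
  have hΓ : ∀ {y : ℝ}, 0 < y → DifferentiableAt ℝ Gamma y :=
    fun hy ↦ (analyticOnNhd_Gamma_Ioi _ hy).differentiableAt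
  have hshift : Gamma ∘ (· + 1) =ᶠ[𝓝 x] fun y ↦ y * Gamma y := by
    filter_upwards [eventually_gt_nhds hx] with y hy using Gamma_add_one hy.ne'
  calc psi (x + 1) = logDeriv (Gamma ∘ (· + 1)) x := by
        rw [logDeriv_comp (hΓ (by linarith)) (by fun_prop), deriv_add_const, deriv_id'', mul_one]
        rfl
    _ = logDeriv id x + logDeriv Gamma x := by
        rw [(logDeriv_congr_nhds hshift).eq_of_nhds]
        exact logDeriv_mul x hx.ne' (Gamma_pos_of_pos hx).ne' differentiableAt_id (hΓ hx)
    _ = psi x + x⁻¹ := by rw [logDeriv_id, one_div, add_comm]; rfl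

lemma psi_add_nat {x : ℝ} (hx : 0 < x) (n : ℕ) :
    psi (x + n) = psi x + ∑ k ∈ Finset.range n, (x + k)⁻¹ := by
  induction n with
  | zero => simp
  | succ n ih =>
    rw [Nat.cast_succ, ← add_assoc, psi_add_one (by positivity), ih, Finset.sum_range_succ,
      add_assoc]

lemma monotoneOn_psi : MonotoneOn psi (Ioi 0) := by
  have hd : ∀ x ∈ Ioi (0 : ℝ), DifferentiableAt ℝ (log ∘ Gamma) x := fun x hx ↦
    ((analyticOnNhd_Gamma_Ioi x hx).differentiableAt.log (Gamma_pos_of_pos hx).ne')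
  refine (convexOn_log_Gamma.monotoneOn_deriv hd).congr fun x hx ↦ ?_
  rw [Function.comp_def, deriv.log (analyticOnNhd_Gamma_Ioi x hx).differentiableAt
    (Gamma_pos_of_pos hx).ne']
  rfl

lemma tendsto_psi_add_nat_sub_psi_add_nat {x y : ℝ} (hx : 0 < x) (hy : 0 < y) :
    Tendsto (fun n : ℕ ↦ psi (y + n) - psi (x + n)) atTop (𝓝 0) := by
  wlog hxy : x ≤ y generalizing x y
  · simpa using (this hy hx (not_le.mp hxy).le).neg
  set m := ⌈y - x⌉₊
  have hgap : ∀ n : ℕ, psi (x + n + m) - psi (x + n) = ∑ k ∈ Finset.range m, (x + n + k)⁻¹ :=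
    fun n ↦ by rw [psi_add_nat (by positivity)]; ring
  have hupper : Tendsto (fun n : ℕ ↦ ∑ k ∈ Finset.range m, (x + n + k)⁻¹) atTop (𝓝 0) := by
    rw [← Finset.sum_const_zero (s := Finset.range m)]
    refine tendsto_finsetSum _ fun k _ ↦ tendsto_inv_atTop_zero.comp ?_
    exact tendsto_atTop_add_const_right _ _
      (tendsto_atTop_add_const_left _ _ tendsto_natCast_atTop_atTop)
  refine tendsto_of_tendsto_of_tendsto_of_le_of_le tendsto_const_nhds hupper
    (fun n ↦ sub_nonneg.mpr ?_) (fun n ↦ ?_)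
  · exact monotoneOn_psi (by positivity : 0 < x + n) (by positivity : 0 < y + n) (by linarith)
  · rw [← hgap]
    gcongr
    exact monotoneOn_psi (by positivity : 0 < y + n) (by positivity : 0 < x + n + m)
      (by linarith [Nat.le_ceil (y - x)])

lemma concaveOn_neg_sum_inv_add_nat (n : ℕ) :
    ConcaveOn ℝ (Ioi 0) fun x : ℝ ↦ -∑ k ∈ Finset.range n, (x + k)⁻¹ := by
  induction n with
  | zero => simpa using concaveOn_const (0 : ℝ) (convex_Ioi 0)
  | succ n ih =>
    simp only [Finset.sum_range_succ, neg_add]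
    refine ih.add (ConvexOn.neg ?_)
    have h := ((convexOn_zpow (𝕜 := ℝ) (-1)).translate_left (n : ℝ)).subset (s := Ioi 0)
      (fun x hx ↦ add_pos_of_nonneg_of_pos n.cast_nonneg hx) (convex_Ioi 0)
    simpa [Function.comp_def] using h

lemma concaveOn_psi : ConcaveOn ℝ (Ioi 0) psi := by
  refine ⟨convex_Ioi 0, fun x hx z hz μ ν hμ hν hμν ↦ ?_⟩
  have hsum := fun n ↦ (concaveOn_neg_sum_inv_add_nat n).2 hx hz hμ hν hμν
  have hy : 0 < μ • x + ν • z := convex_Ioi 0 hx hz hμ hν hμν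
  generalize μ • x + ν • z = y at hsum hy ⊢
  simp only [smul_eq_mul] at hsum ⊢
  have hdefect : ∀ n : ℕ, μ * psi x + ν * psi z - psi y ≤
      μ * (psi (x + n) - psi (y + n)) + ν * (psi (z + n) - psi (y + n)) := by
    intro n
    rw [psi_add_nat hx, psi_add_nat hy, psi_add_nat hz]
    linear_combination hsum n + (psi y + ∑ k ∈ Finset.range n, (y + k)⁻¹) * hμν
  have hlim : Tendsto (fun n : ℕ ↦
      μ * (psi (x + n) - psi (y + n)) + ν * (psi (z + n) - psi (y + n))) atTop (𝓝 0) := by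
    simpa using ((tendsto_psi_add_nat_sub_psi_add_nat hy hx).const_mul μ).add
      ((tendsto_psi_add_nat_sub_psi_add_nat hy hz).const_mul ν)
  exact sub_nonpos.mp (ge_of_tendsto' hlim hdefect)

lemma MonotoneOn.deriv_nonneg_of_mem_nhds {f : ℝ → ℝ} {s : Set ℝ} {x : ℝ} (hf : MonotoneOn f s)
    (hs : s ∈ 𝓝 x) : 0 ≤ deriv f x := by
  rw [← derivWithin_of_mem_nhds hs]
  exact hf.derivWithin_nonneg

lemma logDeriv_le_logDeriv_of_concaveOn_of_monotoneOn {f : ℝ → ℝ}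
    (hconc : ConcaveOn ℝ (Ioi 0) f) (hmono : MonotoneOn f (Ioi 0))
    (hdiff : ∀ x ∈ Ioi (0 : ℝ), DifferentiableAt ℝ f x) {x y : ℝ} (hx : 0 < x) (hxy : x ≤ y)
    (hfx : 0 < f x) : logDeriv f y ≤ logDeriv f x := by
  have hy : 0 < y := hx.trans_le hxy
  have hderiv : deriv f y ≤ deriv f x := hconc.antitoneOn_deriv hdiff hx hy hxy
  have hderiv_nonneg : 0 ≤ deriv f x := hmono.deriv_nonneg_of_mem_nhds (Ioi_mem_nhds hx)
  have hfxy : f x ≤ f y := hmono hx hy hxy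
  calc deriv f y / f y ≤ deriv f x / f y := by gcongr; linarith
    _ ≤ deriv f x / f x := by gcongr

lemma hasDerivAt_log_comp_add_mul {f : ℝ → ℝ} {a b s : ℝ} (hf : DifferentiableAt ℝ f (a + b * s))
    (hfs : f (a + b * s) ≠ 0) :
    HasDerivAt (fun t ↦ log (f (a + b * t))) (b * logDeriv f (a + b * s)) s := by
  have hlin : HasDerivAt (fun t ↦ a + b * t) b s := by
    simpa using ((hasDerivAt_id s).const_mul b).const_add a
  refine ((hf.hasDerivAt.comp s hlin).log hfs).congr_deriv ?_
  rw [logDeriv_apply, Function.comp_apply]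
  ring

lemma monotoneOn_rpow_div_rpow_comp_add_mul {f : ℝ → ℝ}
    (hconc : ConcaveOn ℝ (Ioi 0) f) (hmono : MonotoneOn f (Ioi 0))
    (hdiff : ∀ x ∈ Ioi (0 : ℝ), DifferentiableAt ℝ f x) {a b c d α β : ℝ} (ha : 0 < a)
    (hb : 0 ≤ b) (hα : 0 ≤ α) (hac : a ≤ c) (hbd : b ≤ d) (hβdαb : β * d ≤ α * b)
    (hpos : ∀ t : ℝ, 0 ≤ t → 0 < f (a + b * t)) :
    MonotoneOn (fun t ↦ f (a + b * t) ^ α / f (c + d * t) ^ β) (Ici 0) := by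
  have hx : ∀ t : ℝ, 0 ≤ t → 0 < a + b * t := fun t ht ↦ by positivity
  have hxy : ∀ t : ℝ, 0 ≤ t → a + b * t ≤ c + d * t := fun t ht ↦ by nlinarith
  have hy : ∀ t : ℝ, 0 ≤ t → 0 < c + d * t := fun t ht ↦ (hx t ht).trans_le (hxy t ht)
  have hfy : ∀ t : ℝ, 0 ≤ t → 0 < f (c + d * t) := fun t ht ↦
    (hpos t ht).trans_le (hmono (hx t ht) (hy t ht) (hxy t ht))
  set F : ℝ → ℝ := fun t ↦ α * log (f (a + b * t)) - β * log (f (c + d * t))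
  have hF : ∀ t : ℝ, 0 ≤ t → HasDerivAt F
      (α * (b * logDeriv f (a + b * t)) - β * (d * logDeriv f (c + d * t))) t := fun t ht ↦
    ((hasDerivAt_log_comp_add_mul (hdiff _ (hx t ht)) (hpos t ht).ne').const_mul α).sub
      ((hasDerivAt_log_comp_add_mul (hdiff _ (hy t ht)) (hfy t ht).ne').const_mul β)
  have hF' : ∀ t : ℝ, 0 ≤ t →
      β * (d * logDeriv f (c + d * t)) ≤ α * (b * logDeriv f (a + b * t)) := by
    intro t ht
    have hLy : 0 ≤ logDeriv f (c + d * t) :=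
      div_nonneg (hmono.deriv_nonneg_of_mem_nhds (Ioi_mem_nhds (hy t ht))) (hfy t ht).le
    have hL := logDeriv_le_logDeriv_of_concaveOn_of_monotoneOn hconc hmono hdiff (hx t ht)
      (hxy t ht) (hpos t ht)
    calc β * (d * logDeriv f (c + d * t)) = (β * d) * logDeriv f (c + d * t) := by ring
      _ ≤ (α * b) * logDeriv f (a + b * t) := by gcongr
      _ = α * (b * logDeriv f (a + b * t)) := by ring
  have hFmono : MonotoneOn F (Ici 0) := by
    refine monotoneOn_of_deriv_nonneg (convex_Ici 0)
      (fun t ht ↦ (hF t ht).continuousAt.continuousWithinAt) ?_ ?_ <;> rw [interior_Ici]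
    · exact fun t ht ↦ (hF t ht.le).differentiableAt.differentiableWithinAt
    · exact fun t ht ↦ (hF t ht.le).deriv ▸ sub_nonneg.mpr (hF' t ht.le)
  refine (exp_monotone.comp_monotoneOn hFmono).congr fun t ht ↦ ?_
  simp only [F, Function.comp_apply, exp_sub, rpow_def_of_pos (hpos t ht),
    rpow_def_of_pos (hfy t ht), mul_comm α, mul_comm β]

theorem U_bounds_general (a b c d α β : ℝ) (ha : 0 < a) (hb : 0 < b)
    (hα : 0 < α) (hac : a ≤ c) (hbd : b ≤ d)
    (hβdαb : β * d ≤ α * b)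
    (hpos : ∀ t : ℝ, 0 ≤ t → 0 < psi (a + b * t) ∧ 0 < psi (c + d * t))
    (t : ℝ) (ht : t ∈ Set.Icc (0 : ℝ) 1) :
    psi a ^ α / psi c ^ β ≤ psi (a + b * t) ^ α / psi (c + d * t) ^ β ∧
      psi (a + b * t) ^ α / psi (c + d * t) ^ β ≤ psi (a + b) ^ α / psi (c + d) ^ β := by
  have hmono := monotoneOn_rpow_div_rpow_comp_add_mul concaveOn_psi monotoneOn_psi
    (fun _ hx ↦ differentiableAt_psi hx) ha hb.le hα.le hac hbd hβdαb fun s hs ↦ (hpos s hs).1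
  have h0 := hmono self_mem_Ici ht.1 ht.1
  have h1 := hmono ht.1 (zero_le_one' ℝ) ht.2
  simp only [mul_zero, add_zero, mul_one] at h0 h1
  exact ⟨h0, h1⟩

theorem U_bounds (a b c d α β : ℝ) (ha : 0 < a) (hb : 0 < b) (hc : 0 < c)
    (hd : 0 < d) (hα : 0 < α) (hβ : 0 < β) (hac : a ≤ c) (hbd : b ≤ d)
    (hβdαb : β * d ≤ α * b)
    (hpos : ∀ t : ℝ, 0 ≤ t → 0 < psi (a + b * t) ∧ 0 < psi (c + d * t))
    (t : ℝ) (ht : t ∈ Set.Icc (0 : ℝ) 1) :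
    psi a ^ α / psi c ^ β ≤ psi (a + b * t) ^ α / psi (c + d * t) ^ β ∧
      psi (a + b * t) ^ α / psi (c + d * t) ^ β ≤ psi (a + b) ^ α / psi (c + d) ^ β :=
  U_bounds_general a b c d α β ha hb hα hac hbd hβdαb hpos t ht
end

section
/- Let m be a positive odd integer. Then for all real numbers s, t with 0 < s ≤ t, one has ψ^(m+1)(s)/ψ^(m)(s) ≤ ψ^(m+1)(t)/ψ^(m)(t); that is, the function y ↦ ψ^(m+1)(y)/ψ^(m)(y) is non-decreasing on (0,∞). -/
/-!
For `x > 0` and `k ≥ 2` write `ζ(k, x) = ∑ₙ (x + n)⁻ᵏ` (`hurwitzSum`). Differentiating the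
Bohr–Mollerup approximations of `log Γ`, whose derivatives converge uniformly on bounded
intervals, gives `ψ(x) = -γ + ∑ₙ ((n + 1)⁻¹ - (x + n)⁻¹)`, hence `ψ' = ζ(2, ·)` and
`ψ^(m) = (-1)^(m+1) m! ζ(m + 1, ·)`. The ratio in question is therefore
`-(m + 1) ζ(m + 2, x) / ζ(m + 1, x)`, and `ζ(k + 1, ·) / ζ(k, ·)` decreases because the numerator
of its derivative, `k ζ(k + 1)² - (k + 1) ζ(k) ζ(k + 2)`, is negative by Cauchy–Schwarz.
-/

open Real Filter Topology Set

noncomputable def hurwitzSum (k : ℕ) (y : ℝ) : ℝ := ∑' n : ℕ, ((y + n) ^ k)⁻¹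

section HurwitzSum

variable {k : ℕ} {x y : ℝ}

lemma summable_inv_add_nat_pow (y : ℝ) (hk : 1 < k) :
    Summable fun n : ℕ => ((y + n) ^ k)⁻¹ := by
  refine .of_norm <| ((summable_one_div_nat_add_rpow y k).2 (mod_cast hk)).congr fun n => ?_
  rw [norm_inv, norm_pow, Real.norm_eq_abs, one_div, Real.rpow_natCast, add_comm]

lemma hurwitzSum_pos (hy : 0 < y) (hk : 1 < k) : 0 < hurwitzSum k y :=
  (summable_inv_add_nat_pow y hk).tsum_pos (fun n => by positivity) 0 (by positivity)

lemma hasDerivAt_inv_add_pow (k : ℕ) {a : ℝ} (hy : y + a ≠ 0) :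
    HasDerivAt (fun z => ((z + a) ^ k)⁻¹) (-k * ((y + a) ^ (k + 1))⁻¹) y := by
  have h := (hasDerivAt_zpow (-(k : ℤ)) (y + a) (Or.inl hy)).comp_add_const y a
  simp only [zpow_neg, zpow_natCast] at h
  refine h.congr_deriv ?_
  rw [show -(k : ℤ) - 1 = -((k + 1 : ℕ) : ℤ) by push_cast; ring, zpow_neg, zpow_natCast]
  push_cast; ring

lemma hasDerivAt_hurwitzSum (hk : 1 < k) (hx : 0 < x) :
    HasDerivAt (hurwitzSum k) (-k * hurwitzSum (k + 1) x) x := by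
  have hpos : ∀ y ∈ Ioi (x / 2), ∀ n : ℕ, 0 < y + n := fun y hy n => by
    have : 0 < y := (half_pos hx).trans hy
    positivity
  have hderiv := hasDerivAt_tsum_of_isPreconnected
    (g' := fun (n : ℕ) (y : ℝ) => -(k : ℝ) * ((y + n) ^ (k + 1))⁻¹)
    ((summable_inv_add_nat_pow (x / 2) (by omega : 1 < k + 1)).mul_left (k : ℝ))
    isOpen_Ioi isPreconnected_Ioi
    (fun n y hy => hasDerivAt_inv_add_pow k (hpos y hy n).ne')
    (fun n y hy => ?_) (half_lt_self hx) (summable_inv_add_nat_pow x hk) (half_lt_self hx)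
  · rw [hurwitzSum, ← tsum_mul_left]
    exact hderiv
  · have : 0 < x / 2 + n := by positivity
    rw [norm_mul, norm_neg, Real.norm_natCast, norm_inv, norm_pow, Real.norm_eq_abs,
      abs_of_pos (hpos y hy n)]
    gcongr
    exact hy.le

lemma sq_hurwitzSum_succ_le (hy : 0 < y) (hk : 1 < k) :
    hurwitzSum (k + 1) y ^ 2 ≤ hurwitzSum k y * hurwitzSum (k + 2) y := by
  set t := hurwitzSum (k + 1) y / hurwitzSum k y
  have hsum (j : ℕ) (hj : 1 < j) : HasSum (fun n : ℕ => ((y + n) ^ j)⁻¹) (hurwitzSum j y) :=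
    (summable_inv_add_nat_pow y hj).hasSum
  -- Cauchy–Schwarz: `∑ (y + n)⁻ᵏ (t - (y + n)⁻¹)² ≥ 0` is a quadratic in `t`.
  have hquad :
      0 ≤ t ^ 2 * hurwitzSum k y - 2 * t * hurwitzSum (k + 1) y + hurwitzSum (k + 2) y := by
    refine HasSum.nonneg (fun n => ?_)
      ((((hsum k hk).mul_left (t ^ 2)).sub ((hsum (k + 1) (by omega)).mul_left (2 * t))).add
        (hsum (k + 2) (by omega)))
    have : 0 < y + n := by positivity
    have e : t ^ 2 * ((y + n) ^ k)⁻¹ - 2 * t * ((y + n) ^ (k + 1))⁻¹ + ((y + n) ^ (k + 2))⁻¹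
        = ((y + n) ^ k)⁻¹ * (t - (y + n)⁻¹) ^ 2 := by
      field_simp
      ring
    rw [e]
    positivity
  have hF := hurwitzSum_pos hy (by omega : 1 < k)
  have : t * hurwitzSum k y = hurwitzSum (k + 1) y := div_mul_cancel₀ _ hF.ne'
  nlinarith

lemma antitoneOn_hurwitzSum_succ_div (hk : 1 < k) :
    AntitoneOn (fun y => hurwitzSum (k + 1) y / hurwitzSum k y) (Ioi 0) := by
  have hderiv : ∀ y ∈ Ioi (0 : ℝ), HasDerivAt (fun z => hurwitzSum (k + 1) z / hurwitzSum k z)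
      ((-(k + 1 : ℕ) * hurwitzSum (k + 1 + 1) y * hurwitzSum k y
        - hurwitzSum (k + 1) y * (-k * hurwitzSum (k + 1) y)) / hurwitzSum k y ^ 2) y :=
    fun y hy => (hasDerivAt_hurwitzSum (by omega) hy).div (hasDerivAt_hurwitzSum hk hy)
      (hurwitzSum_pos hy hk).ne'
  refine antitoneOn_of_hasDerivWithinAt_nonpos (convex_Ioi 0)
    (fun y hy => (hderiv y hy).continuousAt.continuousWithinAt)
    (fun y hy => (hderiv y (interior_subset hy)).hasDerivWithinAt) fun y hy => ?_
  rw [interior_Ioi] at hy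
  have hpos₀ := hurwitzSum_pos hy hk
  have hpos₂ := hurwitzSum_pos hy (by omega : 1 < k + 2)
  have hsq := sq_hurwitzSum_succ_le hy hk
  refine div_nonpos_of_nonpos_of_nonneg ?_ (sq_nonneg _)
  push_cast
  nlinarith [mul_le_mul_of_nonneg_left hsq (Nat.cast_nonneg k : (0 : ℝ) ≤ k)]

end HurwitzSum

noncomputable def digammaSeries (y : ℝ) : ℝ :=
  -eulerMascheroniConstant + ∑' n : ℕ, (((n : ℝ) + 1)⁻¹ - (y + n)⁻¹)

section Digamma

variable {x y : ℝ}

lemma hasDerivAt_logGammaSeq (hy : 0 < y) (n : ℕ) :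
    HasDerivAt (BohrMollerup.logGammaSeq · n)
      (log n - ∑ m ∈ Finset.range (n + 1), (y + m)⁻¹) y := by
  have hlog : HasDerivAt (fun z => ∑ m ∈ Finset.range (n + 1), log (z + m))
      (∑ m ∈ Finset.range (n + 1), (y + m)⁻¹) y :=
    .fun_sum fun m _ => by
      simpa using ((hasDerivAt_id y).add_const (m : ℝ)).log (by positivity)
  simpa [BohrMollerup.logGammaSeq] using
    (((hasDerivAt_id y).mul_const (log n)).add_const (log n.factorial)).fun_sub hlog

lemma tendsto_log_sub_harmonic_succ :
    Tendsto (fun n : ℕ => log n - ∑ m ∈ Finset.range (n + 1), ((m : ℝ) + 1)⁻¹) atTop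
      (𝓝 (-eulerMascheroniConstant)) := by
  have h := (tendsto_harmonic_sub_log.add tendsto_one_div_add_atTop_nhds_zero_nat).neg
  rw [add_zero] at h
  refine h.congr fun n => ?_
  push_cast [harmonic, Finset.sum_range_succ]
  ring

lemma abs_inv_nat_succ_sub_inv_add_le {b : ℝ} (hy : y ∈ Ioo 0 b) {m : ℕ} (hm : 1 ≤ m) :
    |((m : ℝ) + 1)⁻¹ - (y + m)⁻¹| ≤ (b + 1) * ((m : ℝ) ^ 2)⁻¹ := by
  obtain ⟨hy0, hyb⟩ := hy
  have hm' : (1 : ℝ) ≤ m := by exact_mod_cast hm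
  have e : ((m : ℝ) + 1)⁻¹ - (y + m)⁻¹ = (y - 1) / (((m : ℝ) + 1) * (y + m)) := by
    field_simp
    ring
  rw [e, abs_div, abs_of_pos (by positivity : (0 : ℝ) < ((m : ℝ) + 1) * (y + m)), div_eq_mul_inv]
  gcongr
  · linarith
  · exact abs_le.2 ⟨by linarith, by linarith⟩
  · nlinarith

lemma tendstoUniformlyOn_deriv_logGammaSeq (b : ℝ) :
    TendstoUniformlyOn (fun (n : ℕ) (y : ℝ) => log n - ∑ m ∈ Finset.range (n + 1), (y + m)⁻¹)
      digammaSeries atTop (Ioo 0 b) := by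
  have hseries : TendstoUniformlyOn
      (fun (n : ℕ) (y : ℝ) => ∑ m ∈ Finset.range (n + 1), (((m : ℝ) + 1)⁻¹ - (y + m)⁻¹))
      (fun y => ∑' m : ℕ, (((m : ℝ) + 1)⁻¹ - (y + m)⁻¹)) atTop (Ioo 0 b) := fun v hv =>
    (tendsto_add_atTop_nat 1).eventually <| tendstoUniformlyOn_tsum_nat_eventually
      ((summable_nat_pow_inv.2 one_lt_two).mul_left (b + 1))
      (eventually_atTop.2 ⟨1, fun m hm y hy => abs_inv_nat_succ_sub_inv_add_le hy hm⟩) v hv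
  refine ((tendsto_log_sub_harmonic_succ.tendstoUniformlyOn_const _).add hseries).congr ?_
  refine Eventually.of_forall fun n y _ => ?_
  simp only [Pi.add_apply, Finset.sum_sub_distrib]
  ring

lemma hasDerivAt_log_Gamma (hx : 0 < x) :
    HasDerivAt (fun y => log (Gamma y)) (digammaSeries x) x :=
  hasDerivAt_of_tendstoUniformlyOn isOpen_Ioo (tendstoUniformlyOn_deriv_logGammaSeq (x + 1))
    (Eventually.of_forall fun n _ hy => hasDerivAt_logGammaSeq hy.1 n)
    (fun _ hy => BohrMollerup.tendsto_log_gamma hy.1) ⟨hx, lt_add_one x⟩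

lemma psi_eq_digammaSeries (hx : 0 < x) : psi x = digammaSeries x := by
  have hΓ : ∀ m : ℕ, x ≠ -m := fun m => by
    have : (0 : ℝ) ≤ m := m.cast_nonneg
    linarith
  exact ((differentiableAt_Gamma hΓ).hasDerivAt.log (Gamma_pos_of_pos hx).ne').unique
    (hasDerivAt_log_Gamma hx)

lemma hasDerivAt_digammaSeries (hx : 0 < x) : HasDerivAt digammaSeries (hurwitzSum 2 x) x := by
  -- the series vanishes at `1`, so the open set must contain both `x` and `1`
  set c := min x 1 / 2
  have hc : 0 < c := by positivity
  have hx' : x ∈ Ioi c := by simp only [mem_Ioi, c]; linarith [min_le_left x 1]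
  have h1 : (1 : ℝ) ∈ Ioi c := by simp only [mem_Ioi, c]; linarith [min_le_right x 1]
  have hpos : ∀ y ∈ Ioi c, ∀ n : ℕ, 0 < y + n := fun y hy n => by
    have : 0 < y := hc.trans hy
    positivity
  have hderiv := hasDerivAt_tsum_of_isPreconnected
    (g := fun (n : ℕ) (y : ℝ) => ((n : ℝ) + 1)⁻¹ - (y + n)⁻¹)
    (g' := fun (n : ℕ) (y : ℝ) => ((y + n) ^ 2)⁻¹)
    (summable_inv_add_nat_pow c one_lt_two) isOpen_Ioi isPreconnected_Ioi
    (fun n y hy => (((hasDerivAt_id y).add_const (n : ℝ)).inv (hpos y hy n).ne').const_sub _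
      |>.congr_deriv (by rw [neg_div, neg_neg, one_div, id]))
    (fun n y hy => by
      rw [norm_inv, norm_pow, Real.norm_eq_abs, abs_of_pos (hpos y hy n)]
      exact inv_anti₀ (pow_pos (add_pos_of_pos_of_nonneg hc n.cast_nonneg) 2)
        (pow_le_pow_left₀ (add_pos_of_pos_of_nonneg hc n.cast_nonneg).le
          (by linarith [mem_Ioi.1 hy]) 2))
    h1 (summable_zero.congr fun n => by simp [add_comm]) hx'
  exact hderiv.const_add _

end Digamma

open Nat in
lemma eqOn_iteratedDeriv_succ_psi (m : ℕ) :
    EqOn (iteratedDeriv (m + 1) psi) (fun x => (-1) ^ m * (m + 1)! * hurwitzSum (m + 2) x)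
      (Ioi 0) := by
  induction m with
  | zero =>
    intro x hx
    have hψ : EqOn psi digammaSeries (Ioi 0) := fun y hy => psi_eq_digammaSeries hy
    rw [iteratedDeriv_one, hψ.deriv isOpen_Ioi hx, (hasDerivAt_digammaSeries hx).deriv]
    simp
  | succ m ih =>
    intro x hx
    rw [iteratedDeriv_succ, ih.deriv isOpen_Ioi hx,
      ((hasDerivAt_hurwitzSum (by omega) hx).const_mul _).deriv]
    push_cast [factorial_succ]
    ring

lemma iteratedDeriv_psi_div {m : ℕ} (hm : 0 < m) {x : ℝ} (hx : 0 < x) :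
    iteratedDeriv (m + 1) psi x / iteratedDeriv m psi x =
      -(m + 1) * (hurwitzSum (m + 1 + 1) x / hurwitzSum (m + 1) x) := by
  obtain ⟨n, rfl⟩ := Nat.exists_eq_add_one_of_ne_zero hm.ne'
  rw [eqOn_iteratedDeriv_succ_psi (n + 1) hx, eqOn_iteratedDeriv_succ_psi n hx]
  have := hurwitzSum_pos hx (by omega : 1 < n + 2)
  field_simp
  push_cast [Nat.factorial_succ, pow_succ]
  ring

theorem polygamma_ratio_nondecreasing_general (m : ℕ) (hm : 0 < m)
    {s t : ℝ} (hs : 0 < s) (hst : s ≤ t) :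
    iteratedDeriv (m + 1) psi s / iteratedDeriv m psi s ≤
      iteratedDeriv (m + 1) psi t / iteratedDeriv m psi t := by
  have ht : 0 < t := hs.trans_le hst
  rw [iteratedDeriv_psi_div hm hs, iteratedDeriv_psi_div hm ht, neg_mul, neg_mul, neg_le_neg_iff]
  exact mul_le_mul_of_nonneg_left
    (antitoneOn_hurwitzSum_succ_div (by omega) hs ht hst) (by positivity)

theorem polygamma_ratio_nondecreasing (m : ℕ) (hm : 0 < m) (hodd : Odd m)
    {s t : ℝ} (hs : 0 < s) (hst : s ≤ t) :
    iteratedDeriv (m + 1) psi s / iteratedDeriv m psi s ≤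
      iteratedDeriv (m + 1) psi t / iteratedDeriv m psi t :=
  polygamma_ratio_nondecreasing_general m hm hs hst
end

section
/- Let k ≥ 1 and let α be a positive real number. Then for every t ∈ (0,1), k^{−t/k} e^{−t(kγ−γ)/k} Γ(α)/Γ_k(α) ≤ Γ(α+t)/Γ_k(α+t) ≤ k^{(1−t)/k} e^{(1−t)(kγ−γ)/k} Γ(α+1)/Γ_k(α+1). -/
open Real Filter Finset Topology

/-- The k-Gamma function `Γ_k(t) = ∫₀^∞ e^{-x^k/k} x^{t-1} dx`. -/
noncomputable def gammak (k t : ℝ) : ℝ :=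
  ∫ x in Set.Ioi (0 : ℝ), Real.exp (-(x ^ k) / k) * x ^ (t - 1)

lemma gammak_eq {k t : ℝ} (hk : 0 < k) (ht : 0 < t) :
    gammak k t = k ^ (t / k - 1) * Real.Gamma (t / k) := by
  have h1 : gammak k t = ∫ x in Set.Ioi (0 : ℝ), x ^ (t - 1) * Real.exp (-(1/k) * x ^ k) := by
    unfold gammak
    refine MeasureTheory.setIntegral_congr_fun measurableSet_Ioi (fun x _ => ?_)
    rw [mul_comm]
    congr 1
    ring_nf
  rw [h1, integral_rpow_mul_exp_neg_mul_rpow hk (by linarith : (-1:ℝ) < t - 1)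
    (by positivity : (0:ℝ) < 1/k)]
  have ht1 : t - 1 + 1 = t := by ring
  rw [ht1]
  have h2 : ((1:ℝ)/k) ^ (-t / k) = k ^ (t / k) := by
    rw [one_div, Real.inv_rpow hk.le, ← Real.rpow_neg hk.le, neg_div, neg_neg]
  rw [h2, Real.rpow_sub hk, Real.rpow_one]
  ring

/-- The elementary factor. -/
noncomputable def Qf (k t : ℝ) (j : ℕ) : ℝ :=
  Real.exp (t * (k - 1) / (((j : ℝ) + 1) * k)) *
    ((t + ((j : ℝ) + 1) * k) / (k * (t + ((j : ℝ) + 1))))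

/-- The partial product. -/
noncomputable def Qn (k t : ℝ) (n : ℕ) : ℝ := ∏ j ∈ Finset.range n, Qf k t j

lemma Qf_nonneg {k t : ℝ} (hk : 0 < k) (ht : 0 ≤ t) (j : ℕ) : 0 ≤ Qf k t j := by
  unfold Qf
  have hj : (0:ℝ) < (j : ℝ) + 1 := by positivity
  positivity

lemma Qf_mono {k : ℝ} (hk : 1 ≤ k) {a b : ℝ} (ha : 0 ≤ a) (hab : a ≤ b) (j : ℕ) :
    Qf k a j ≤ Qf k b j := by
  have hk0 : (0:ℝ) < k := by linarith
  set J : ℝ := (j : ℝ) + 1 with hJdef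
  have hJ : (1:ℝ) ≤ J := by simp [hJdef]
  have hJ0 : (0:ℝ) < J := by linarith
  have hJk : (0:ℝ) < J * k := by positivity
  have hb : (0:ℝ) ≤ b := le_trans ha hab
  unfold Qf
  rw [mul_div_assoc', mul_div_assoc', div_le_div_iff₀ (by positivity) (by positivity)]
  have hsplit : Real.exp (b * (k-1) / (J*k)) =
      Real.exp (a * (k-1) / (J*k)) * Real.exp ((b-a) * (k-1) / (J*k)) := by
    rw [← Real.exp_add]
    congr 1
    field_simp
    ring
  rw [hsplit]
  have h1 : 1 + (b-a)*(k-1)/(J*k) ≤ Real.exp ((b-a)*(k-1)/(J*k)) := by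
    have := Real.add_one_le_exp ((b-a)*(k-1)/(J*k))
    linarith
  have hpoly : (a + J*k) * (k*(b+J)) ≤ (1 + (b-a)*(k-1)/(J*k)) * ((b + J*k) * (k*(a+J))) := by
    rw [← sub_nonneg]
    have hid : (1 + (b-a)*(k-1)/(J*k)) * ((b + J*k) * (k*(a+J))) - (a + J*k) * (k*(b+J))
        = (b-a)*(k-1)*(a*b + b*J + J*k*a) / J := by
      field_simp
      ring
    rw [hid]
    have h3 : (0:ℝ) ≤ (b-a)*(k-1)*(a*b + b*J + J*k*a) := by
      have h4 : (0:ℝ) ≤ a*b + b*J + J*k*a := by positivity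
      have h5 : (0:ℝ) ≤ (b-a)*(k-1) := mul_nonneg (by linarith) (by linarith)
      exact mul_nonneg h5 h4
    positivity
  calc Real.exp (a * (k-1) / (J*k)) * (a + J*k) * (k*(b+J))
      = Real.exp (a * (k-1) / (J*k)) * ((a + J*k) * (k*(b+J))) := by ring
    _ ≤ Real.exp (a * (k-1) / (J*k)) * ((1 + (b-a)*(k-1)/(J*k)) * ((b + J*k) * (k*(a+J)))) := by
        apply mul_le_mul_of_nonneg_left hpoly (Real.exp_nonneg _)
    _ ≤ Real.exp (a * (k-1) / (J*k)) * (Real.exp ((b-a)*(k-1)/(J*k)) * ((b + J*k) * (k*(a+J)))) := by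
        apply mul_le_mul_of_nonneg_left _ (Real.exp_nonneg _)
        apply mul_le_mul_of_nonneg_right h1
        positivity
    _ = Real.exp (a * (k-1) / (J*k)) * Real.exp ((b-a)*(k-1)/(J*k)) * (b + J*k) * (k*(a+J)) := by
        ring

lemma Qn_mono {k : ℝ} (hk : 1 ≤ k) {a b : ℝ} (ha : 0 ≤ a) (hab : a ≤ b) (n : ℕ) :
    Qn k a n ≤ Qn k b n := by
  apply Finset.prod_le_prod
  · exact fun j _ => Qf_nonneg (by linarith) ha j
  · exact fun j _ => Qf_mono hk ha hab j

/-- The limit function. -/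
noncomputable def Lf (k t : ℝ) : ℝ :=
  Real.exp (t * (k - 1) * eulerMascheroniConstant / k) * k *
    (Real.Gamma t / Real.Gamma (t / k))

lemma Qn_eq {k t : ℝ} (hk : 1 ≤ k) (ht : 0 < t) {n : ℕ} (hn : 1 ≤ n) :
    Qn k t n = Real.exp (t * (k - 1) * ((harmonic n : ℝ) - Real.log n) / k) * k *
      (Real.GammaSeq t n / Real.GammaSeq (t / k) n) := by
  have hk0 : (0:ℝ) < k := by linarith
  have hn0 : (0:ℝ) < (n:ℝ) := by exact_mod_cast hn
  have hQ : Qn k t n = Real.exp (t * (k-1) * (harmonic n : ℝ) / k) *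
      ∏ j ∈ Finset.range n, ((t/k + ((j:ℝ)+1)) / (t + ((j:ℝ)+1))) := by
    unfold Qn Qf
    rw [Finset.prod_mul_distrib, ← Real.exp_sum]
    congr 1
    · congr 1
      have hterm : ∀ j ∈ Finset.range n, t * (k-1) / (((j:ℝ)+1) * k)
          = t * (k-1) / k * ((j:ℝ)+1)⁻¹ := by
        intro j _
        have hj : ((j:ℝ)+1) ≠ 0 := by positivity
        rw [div_mul_eq_div_div_swap, div_eq_mul_inv (t * (k-1) / k)]
      rw [Finset.sum_congr rfl hterm, ← Finset.mul_sum]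
      have hh : ((harmonic n : ℝ)) = ∑ j ∈ Finset.range n, ((j:ℝ)+1)⁻¹ := by
        rw [harmonic]
        push_cast
        rfl
      rw [hh]
      ring
    · refine Finset.prod_congr rfl (fun j _ => ?_)
      have hj : (0:ℝ) < (j:ℝ) + 1 := by positivity
      rw [div_eq_div_iff (by positivity) (by positivity)]
      field_simp
  set Ps : ℝ := ∏ j ∈ Finset.range (n+1), (t/k + (j:ℝ)) with hPs
  set Pt : ℝ := ∏ j ∈ Finset.range (n+1), (t + (j:ℝ)) with hPt
  have hPs0 : 0 < Ps := Finset.prod_pos (fun j _ => by positivity)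
  have hPt0 : 0 < Pt := Finset.prod_pos (fun j _ => by positivity)
  have hprod : ∏ j ∈ Finset.range n, ((t/k + ((j:ℝ)+1)) / (t + ((j:ℝ)+1)))
      = k * (Ps / Pt) := by
    rw [Finset.prod_div_distrib]
    have h1 : Ps = (∏ j ∈ Finset.range n, (t/k + ((j:ℝ)+1))) * (t/k) := by
      rw [hPs, Finset.prod_range_succ']
      push_cast
      simp
    have h2 : Pt = (∏ j ∈ Finset.range n, (t + ((j:ℝ)+1))) * t := by
      rw [hPt, Finset.prod_range_succ']
      push_cast
      simp
    have ha : (0:ℝ) < ∏ j ∈ Finset.range n, (t/k + ((j:ℝ)+1)) :=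
      Finset.prod_pos (fun j _ => by positivity)
    have hb : (0:ℝ) < ∏ j ∈ Finset.range n, (t + ((j:ℝ)+1)) :=
      Finset.prod_pos (fun j _ => by positivity)
    rw [h1, h2]
    field_simp
  have hfact : (0:ℝ) < (n.factorial : ℝ) := by exact_mod_cast Nat.factorial_pos n
  have hns : (0:ℝ) < (n:ℝ) ^ (t/k) := Real.rpow_pos_of_pos hn0 _
  have hratio : Real.GammaSeq t n / Real.GammaSeq (t/k) n
      = (n:ℝ) ^ (t - t/k) * (Ps / Pt) := by
    rw [Real.GammaSeq, Real.GammaSeq, ← hPs, ← hPt]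
    have hnt : (n:ℝ) ^ t = (n:ℝ) ^ (t - t/k) * (n:ℝ) ^ (t/k) := by
      rw [← Real.rpow_add hn0]; ring_nf
    rw [hnt]
    field_simp
  have hpow : (n:ℝ) ^ (t - t/k) = Real.exp ((t - t/k) * Real.log n) := by
    rw [Real.rpow_def_of_pos hn0, mul_comm]
  have hcomb : Real.exp (t * (k-1) * ((harmonic n : ℝ) - Real.log n) / k) *
      Real.exp ((t - t/k) * Real.log n) = Real.exp (t * (k-1) * (harmonic n : ℝ) / k) := by
    rw [← Real.exp_add]
    congr 1
    field_simp
    ring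
  rw [hQ, hprod, hratio, hpow, ← hcomb]
  ring

lemma Qn_tendsto {k t : ℝ} (hk : 1 ≤ k) (ht : 0 < t) :
    Tendsto (Qn k t) atTop (𝓝 (Lf k t)) := by
  have hk0 : (0:ℝ) < k := by linarith
  have hG : Real.Gamma (t/k) ≠ 0 := (Real.Gamma_pos_of_pos (by positivity)).ne'
  have h1 : Tendsto (fun n : ℕ => Real.exp (t * (k-1) * ((harmonic n : ℝ) - Real.log n) / k) * k *
      (Real.GammaSeq t n / Real.GammaSeq (t/k) n)) atTop (𝓝 (Lf k t)) := by
    unfold Lf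
    apply Tendsto.mul
    · apply Tendsto.mul_const
      apply (Real.continuous_exp.tendsto _).comp
      exact (Real.tendsto_harmonic_sub_log.const_mul _).div_const _
    · exact (Real.GammaSeq_tendsto_Gamma t).div (Real.GammaSeq_tendsto_Gamma (t/k)) hG
  apply h1.congr'
  filter_upwards [eventually_ge_atTop 1] with n hn
  exact (Qn_eq hk ht hn).symm

lemma Lf_mono {k : ℝ} (hk : 1 ≤ k) {a b : ℝ} (ha : 0 < a) (hab : a ≤ b) :
    Lf k a ≤ Lf k b :=
  le_of_tendsto_of_tendsto' (Qn_tendsto hk ha) (Qn_tendsto hk (lt_of_lt_of_le ha hab))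
    (fun n => Qn_mono hk ha.le hab n)

lemma ratio_eq {k t : ℝ} (hk : 1 ≤ k) (ht : 0 < t) :
    Real.Gamma t / gammak k t =
      Real.exp (-(t * (k-1) * eulerMascheroniConstant / k) + Real.log k * (-(t/k))) *
        Lf k t := by
  have hk0 : (0:ℝ) < k := by linarith
  have hG : (0:ℝ) < Real.Gamma (t/k) := Real.Gamma_pos_of_pos (by positivity)
  rw [gammak_eq hk0 ht, Lf]
  have hkpow : k ^ (t/k - 1) = Real.exp (Real.log k * (t/k - 1)) :=
    Real.rpow_def_of_pos hk0 _
  rw [hkpow, div_eq_iff (by positivity)]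
  have key : Real.exp (-(t*(k-1)*eulerMascheroniConstant/k) + Real.log k * (-(t/k))) *
      Real.exp (t*(k-1)*eulerMascheroniConstant/k) * Real.exp (Real.log k * (t/k - 1)) * k
      = 1 := by
    rw [← Real.exp_add, ← Real.exp_add]
    have hsum : -(t*(k-1)*eulerMascheroniConstant/k) + Real.log k * (-(t/k)) +
        t*(k-1)*eulerMascheroniConstant/k + Real.log k * (t/k - 1) = -Real.log k := by ring
    rw [hsum, Real.exp_neg, Real.exp_log hk0]
    exact inv_mul_cancel₀ hk0.ne'
  calc Real.Gamma t = 1 * Real.Gamma t := (one_mul _).symm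
    _ = Real.exp (-(t*(k-1)*eulerMascheroniConstant/k) + Real.log k * (-(t/k))) *
        Real.exp (t*(k-1)*eulerMascheroniConstant/k) * Real.exp (Real.log k * (t/k - 1)) * k *
        ((Real.Gamma t / Real.Gamma (t/k)) * Real.Gamma (t/k)) := by
        rw [key, div_mul_cancel₀ _ hG.ne', one_mul]
    _ = Real.exp (-(t*(k-1)*eulerMascheroniConstant/k) + Real.log k * (-(t/k))) *
        (Real.exp (t*(k-1)*eulerMascheroniConstant/k) * k * (Real.Gamma t / Real.Gamma (t/k))) *
        (Real.exp (Real.log k * (t/k - 1)) * Real.Gamma (t/k)) := by ring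

theorem W_bounds (k : ℝ) (hk : 1 ≤ k) (α : ℝ) (hα : 0 < α)
    (t : ℝ) (ht : t ∈ Set.Ioo (0 : ℝ) 1) :
    k ^ (-t / k) * Real.exp (-t * (k * eulerMascheroniConstant - eulerMascheroniConstant) / k) *
        Real.Gamma α / gammak k α ≤ Real.Gamma (α + t) / gammak k (α + t) ∧
      Real.Gamma (α + t) / gammak k (α + t) ≤
        k ^ ((1 - t) / k) *
          Real.exp ((1 - t) * (k * eulerMascheroniConstant - eulerMascheroniConstant) / k) *
            Real.Gamma (α + 1) / gammak k (α + 1) := by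
  obtain ⟨ht0, ht1⟩ := ht
  have hk0 : (0:ℝ) < k := by linarith
  have hαt : (0:ℝ) < α + t := by linarith
  have hα1 : (0:ℝ) < α + 1 := by linarith
  have e1 := ratio_eq hk hα
  have e2 := ratio_eq hk hαt
  have e3 := ratio_eq hk hα1
  constructor
  · have hmul : k ^ (-t / k) *
        Real.exp (-t * (k * eulerMascheroniConstant - eulerMascheroniConstant) / k) *
        Real.Gamma α / gammak k α
        = k ^ (-t / k) *
          Real.exp (-t * (k * eulerMascheroniConstant - eulerMascheroniConstant) / k) *
          (Real.Gamma α / gammak k α) := by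
      ring
    rw [hmul, e1, Real.rpow_def_of_pos hk0, ← Real.exp_add, ← mul_assoc, ← Real.exp_add, e2]
    have hexp : Real.log k * (-t / k) +
        -t * (k * eulerMascheroniConstant - eulerMascheroniConstant) / k +
        (-(α * (k-1) * eulerMascheroniConstant / k) + Real.log k * (-(α/k)))
        = -((α+t) * (k-1) * eulerMascheroniConstant / k) + Real.log k * (-((α+t)/k)) := by
      ring
    rw [hexp]
    exact mul_le_mul_of_nonneg_left (Lf_mono hk hα (by linarith)) (Real.exp_nonneg _)
  · have hmul : k ^ ((1-t) / k) *
        Real.exp ((1-t) * (k * eulerMascheroniConstant - eulerMascheroniConstant) / k) *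
        Real.Gamma (α+1) / gammak k (α+1)
        = k ^ ((1-t) / k) *
          Real.exp ((1-t) * (k * eulerMascheroniConstant - eulerMascheroniConstant) / k) *
          (Real.Gamma (α+1) / gammak k (α+1)) := by
      ring
    rw [hmul, e3, Real.rpow_def_of_pos hk0, ← Real.exp_add, ← mul_assoc, ← Real.exp_add, e2]
    have hexp : Real.log k * ((1-t) / k) +
        (1-t) * (k * eulerMascheroniConstant - eulerMascheroniConstant) / k +
        (-((α+1) * (k-1) * eulerMascheroniConstant / k) + Real.log k * (-((α+1)/k)))
        = -((α+t) * (k-1) * eulerMascheroniConstant / k) + Real.log k * (-((α+t)/k)) := by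
      ring
    rw [hexp]
    exact mul_le_mul_of_nonneg_left (Lf_mono hk hαt (by linarith)) (Real.exp_nonneg _)
end
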